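/- arXiv:1212.1735 — 4 statements merged into one kernel-verified Lean document; each statement's English description precedes it below -/
import Mathlib

section
/- Under the layered-network construction, assume additionally that the attachment maps are surjective, i.e., for every index i, every vertex of the center C_i equals c_i(v) for some v ∈ M. Then the graph G is k-vertex-connected: |V| > k, and for every set S of vertices with |S| ≤ k − 1, the subgraph of G induced on V \ S is connected. -/
/-!
Since `|S| < k` and the centers are disjoint, some center `C i₀` misses `S`; fix `b ∈ C i₀`.
Every surviving user `v` reaches `b` through `c v i₀ ∈ C i₀`. A surviving center vertex
`x ∈ C j` reaches a surviving user: the `k + 1` vertices of `C j` have pairwise distinct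
attached users (surjectivity), and `S` cannot contain, for each `y ∈ C j`, either `y` or its
attached user, as this would inject `C j` into `S`.
-/

open Finset Function

variable {V ι : Type*}

theorem Finset.exists_disjoint_of_card_lt [Fintype ι] {C : ι → Finset V}
    (hC : Pairwise (Disjoint on C)) {S : Finset V} (hS : #S < Fintype.card ι) :
    ∃ i, Disjoint (C i) S := by
  by_contra! h
  choose g hgC hgS using fun i => not_disjoint_iff.1 (h i)
  have hg : Function.Injective g := fun i j hij => by
    by_contra hne
    exact disjoint_left.1 (hC hne) (hgC i) (hij ▸ hgC j)
  have := card_le_card_of_injOn (s := univ) g (fun i _ => hgS i) hg.injOn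
  simp only [card_univ] at this
  omega

theorem Set.SurjOn.exists_notMem_and_map_notMem [DecidableEq V] {C M S : Finset V} {f : V → V}
    (hf : Set.SurjOn f M C) (hCM : Disjoint C M) (hS : #S < #C) :
    ∃ v ∈ M, v ∉ S ∧ f v ∈ C ∧ f v ∉ S := by
  by_contra! h
  choose! u huM hfu using fun x (hx : x ∈ C) => (hf hx : ∃ v, v ∈ M ∧ f v = x)
  let g : V → V := fun y => if y ∈ S then y else u y
  have hmaps : Set.MapsTo g C S := fun y hy => by
    simp only [g]
    split_ifs with hyS
    · exact hyS
    · by_contra huS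
      have hfuy := hfu y hy
      exact hyS (hfuy ▸ h (u y) (huM y hy) huS (by rwa [hfuy]))
  have hinj : Set.InjOn g C := fun y₁ hy₁ y₂ hy₂ heq => by
    simp only [g] at heq
    split_ifs at heq
    · exact heq
    · exact absurd (heq ▸ huM y₂ hy₂) (Finset.disjoint_left.1 hCM hy₁)
    · exact absurd (heq ▸ huM y₁ hy₁) (Finset.disjoint_right.1 hCM · hy₂)
    · rw [← hfu y₁ hy₁, ← hfu y₂ hy₂, heq]
  have := card_le_card_of_injOn g hmaps hinj
  omega

namespace SimpleGraph

variable {G : SimpleGraph V} {T : Set V}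

theorem induce_reachable_of_adj {x y : V} (hx : x ∈ T) (hy : y ∈ T) (h : G.Adj x y) :
    (G.induce T).Reachable ⟨x, hx⟩ ⟨y, hy⟩ :=
  Adj.reachable h

theorem IsClique.induce_reachable {s : Set V} (hs : G.IsClique s) {x y : V} (hxs : x ∈ s)
    (hys : y ∈ s) (hx : x ∈ T) (hy : y ∈ T) :
    (G.induce T).Reachable ⟨x, hx⟩ ⟨y, hy⟩ := by
  by_cases hxy : x = y
  · subst hxy; rfl
  · exact induce_reachable_of_adj hx hy (hs hxs hys hxy)

theorem induce_connected_of_layered [Fintype ι] [DecidableEq V] {C : ι → Finset V}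
    {M S : Finset V} {c : V → ι → V} (hCC : Pairwise (Disjoint on C))
    (hCM : ∀ i, Disjoint (C i) M) (hcover : ∀ v, v ∈ M ∨ ∃ i, v ∈ C i)
    (hc : ∀ v ∈ M, ∀ i, c v i ∈ C i)
    (hsurj : ∀ i, Set.SurjOn (c · i) M (C i))
    (hclique : ∀ i, G.IsClique (C i : Set V)) (hattach : ∀ v ∈ M, ∀ i, G.Adj v (c v i))
    (hSι : #S < Fintype.card ι) (hSC : ∀ i, #S < #(C i)) :
    (G.induce {v | v ∉ S}).Connected := by
  obtain ⟨i₀, hi₀⟩ := exists_disjoint_of_card_lt hCC hSι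
  obtain ⟨b, hb⟩ : (C i₀).Nonempty := card_pos.1 (by have := hSC i₀; omega)
  have hbS : b ∉ S := Finset.disjoint_left.1 hi₀ hb
  have reach_user : ∀ v ∈ M, ∀ hvS : v ∉ S,
      (G.induce {v | v ∉ S}).Reachable ⟨b, hbS⟩ ⟨v, hvS⟩ := fun v hv hvS =>
    have hcv := hc v hv i₀
    ((hclique i₀).induce_reachable hb hcv hbS (Finset.disjoint_left.1 hi₀ hcv)).trans
      (induce_reachable_of_adj _ hvS (hattach v hv i₀).symm)
  refine (connected_iff_exists_forall_reachable _).2 ⟨⟨b, hbS⟩, fun ⟨x, hxS⟩ => ?_⟩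
  rcases hcover x with hxM | ⟨j, hxC⟩
  · exact reach_user x hxM hxS
  · obtain ⟨v, hvM, hvS, hcvC, hcvS⟩ :=
      Set.SurjOn.exists_notMem_and_map_notMem (hsurj j) (hCM j) (hSC j)
    exact (reach_user v hvM hvS).trans <|
      (induce_reachable_of_adj hvS hcvS (hattach v hvM j)).trans <|
        (hclique j).induce_reachable hcvC hxC hcvS hxS

end SimpleGraph

theorem layered_network_k_connected_general
    {V : Type} [Fintype V] [DecidableEq V]
    (k : ℕ) (hk : 1 ≤ k)
    (C : Fin k → Finset V) (M : Finset V)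
    (hCcard : ∀ i : Fin k, (C i).card = k + 1)
    (hCC : ∀ i j : Fin k, i ≠ j → Disjoint (C i) (C j))
    (hCM : ∀ i : Fin k, Disjoint (C i) M)
    (hcover : ∀ v : V, v ∈ M ∨ ∃ i : Fin k, v ∈ C i)
    (c : V → Fin k → V)
    (hc : ∀ v ∈ M, ∀ i : Fin k, c v i ∈ C i)
    (G : SimpleGraph V)
    (hAdj : ∀ x y : V, G.Adj x y ↔
      ((x ≠ y ∧ ∃ i : Fin k, x ∈ C i ∧ y ∈ C i) ∨
        (∃ v ∈ M, ∃ i : Fin k, (x = v ∧ y = c v i) ∨ (y = v ∧ x = c v i))))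
    (hsurj : ∀ i : Fin k, ∀ x ∈ C i, ∃ v ∈ M, c v i = x) :
    k < Fintype.card V ∧
      ∀ S : Finset V, S.card ≤ k - 1 →
        (G.induce {v : V | v ∉ S}).Connected := by
  refine ⟨?_, fun S hS => ?_⟩
  · calc k < #(C ⟨0, hk⟩) := by rw [hCcard]; omega
      _ ≤ Fintype.card V := card_le_univ _
  · have hclique (i : Fin k) : G.IsClique (C i : Set V) := fun x hx y hy hxy =>
      (hAdj x y).2 (.inl ⟨hxy, i, hx, hy⟩)
    have hattach : ∀ v ∈ M, ∀ i, G.Adj v (c v i) := fun v hv i =>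
      (hAdj v (c v i)).2 (.inr ⟨v, hv, i, .inl ⟨rfl, rfl⟩⟩)
    exact SimpleGraph.induce_connected_of_layered (fun i j => hCC i j) hCM hcover hc hsurj
      hclique hattach (by simp only [Fintype.card_fin]; omega) (fun i => by rw [hCcard]; omega)

/-- Under the layered-network construction with surjective attachment
maps, the graph `G` is `k`-vertex-connected: `|V| > k` and deleting any set `S` of
at most `k - 1` vertices leaves a connected induced subgraph. -/
theorem layered_network_k_connected
    {V : Type} [Fintype V] [DecidableEq V]
    (k : ℕ) (hk : 1 ≤ k)
    (C : Fin k → Finset V) (M : Finset V)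
    (hCcard : ∀ i : Fin k, (C i).card = k + 1)
    (hMcard : k ≤ M.card)
    (hCC : ∀ i j : Fin k, i ≠ j → Disjoint (C i) (C j))
    (hCM : ∀ i : Fin k, Disjoint (C i) M)
    (hcover : ∀ v : V, v ∈ M ∨ ∃ i : Fin k, v ∈ C i)
    (c : V → Fin k → V)
    (hc : ∀ v ∈ M, ∀ i : Fin k, c v i ∈ C i)
    (G : SimpleGraph V)
    (hAdj : ∀ x y : V, G.Adj x y ↔
      ((x ≠ y ∧ ∃ i : Fin k, x ∈ C i ∧ y ∈ C i) ∨
        (∃ v ∈ M, ∃ i : Fin k, (x = v ∧ y = c v i) ∨ (y = v ∧ x = c v i))))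
    (hsurj : ∀ i : Fin k, ∀ x ∈ C i, ∃ v ∈ M, c v i = x) :
    k < Fintype.card V ∧
      ∀ S : Finset V, S.card ≤ k - 1 →
        (G.induce {v : V | v ∉ S}).Connected :=
  layered_network_k_connected_general k hk C M hCcard hCC hCM hcover c hc G hAdj hsurj
end

section
/- (Case 2) Under the layered-network construction, let a ∈ C_i and b ∈ C_j be vertices in two distinct centers (i ≠ j), and let S ⊆ M be any set of user nodes with |S| ≤ k − 1. Then a and b are connected in the subgraph of G induced on V \ S. -/
/-!
Deleting fewer than `k` users from `M` leaves some user `v`. Its attachment vertices `c v i`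
and `c v j` lie in centers, which contain no users and hence survive the deletion, and each
center is a clique, so `a — c v i — v — c v j — b` is a path avoiding `S`.
-/

namespace SimpleGraph

variable {V : Type} {G : SimpleGraph V} {s : Set V}

theorem IsClique.reachable_induce {T : Set V} (hT : G.IsClique T) {p q : V}
    (hpT : p ∈ T) (hqT : q ∈ T) (hps : p ∈ s) (hqs : q ∈ s) :
    (G.induce s).Reachable ⟨p, hps⟩ ⟨q, hqs⟩ := by
  by_cases hpq : p = q
  · subst hpq
    rfl
  · exact Adj.reachable (induce_adj.mpr (hT hpT hqT hpq))

end SimpleGraph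

open SimpleGraph Finset

theorem layered_network_two_centers_delete_users_general
    {V : Type}
    (k : ℕ) (hk : 1 ≤ k)
    (C : Fin k → Finset V) (M : Finset V)
    (hMcard : k ≤ M.card)
    (hCM : ∀ i : Fin k, Disjoint (C i) M)
    (c : V → Fin k → V)
    (hc : ∀ v ∈ M, ∀ i : Fin k, c v i ∈ C i)
    (G : SimpleGraph V)
    (hAdj : ∀ x y : V, G.Adj x y ↔
      ((x ≠ y ∧ ∃ i : Fin k, x ∈ C i ∧ y ∈ C i) ∨
        (∃ v ∈ M, ∃ i : Fin k, (x = v ∧ y = c v i) ∨ (y = v ∧ x = c v i))))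
    (i j : Fin k) (a b : V) (ha : a ∈ C i) (hb : b ∈ C j)
    (S : Finset V) (hSM : S ⊆ M) (hScard : S.card ≤ k - 1)
    (haS : a ∉ S) (hbS : b ∉ S) :
    (G.induce {v : V | v ∉ S}).Reachable ⟨a, haS⟩ ⟨b, hbS⟩ := by
  obtain ⟨v, hvM, hvS⟩ := exists_mem_notMem_of_card_lt_card (s := S) (t := M) (by omega)
  have hclique (t : Fin k) : G.IsClique (C t : Set V) :=
    fun p hp q hq hpq => (hAdj p q).mpr (.inl ⟨hpq, t, hp, hq⟩)
  have hattach (t : Fin k) : G.Adj v (c v t) :=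
    (hAdj v (c v t)).mpr (.inr ⟨v, hvM, t, .inl ⟨rfl, rfl⟩⟩)
  have hcS (t : Fin k) : c v t ∉ S :=
    fun h => disjoint_left.mp (hCM t) (hc v hvM t) (hSM h)
  have hvi : (G.induce {v : V | v ∉ S}).Adj ⟨c v i, hcS i⟩ ⟨v, hvS⟩ :=
    induce_adj.mpr (hattach i).symm
  have hvj : (G.induce {v : V | v ∉ S}).Adj ⟨v, hvS⟩ ⟨c v j, hcS j⟩ :=
    induce_adj.mpr (hattach j)
  exact ((hclique i).reachable_induce ha (hc v hvM i) haS (hcS i)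
    |>.trans hvi.reachable |>.trans hvj.reachable
    |>.trans ((hclique j).reachable_induce (hc v hvM j) hb (hcS j) hbS))

/-- Case 2: vertices `a ∈ C i` and `b ∈ C j` of two distinct centers
remain connected after deleting any set `S ⊆ M` of at most `k - 1` user nodes. -/
theorem layered_network_two_centers_delete_users
    {V : Type} [Fintype V] [DecidableEq V]
    (k : ℕ) (hk : 1 ≤ k)
    (C : Fin k → Finset V) (M : Finset V)
    (hCcard : ∀ i : Fin k, (C i).card = k + 1)
    (hMcard : k ≤ M.card)
    (hCC : ∀ i j : Fin k, i ≠ j → Disjoint (C i) (C j))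
    (hCM : ∀ i : Fin k, Disjoint (C i) M)
    (hcover : ∀ v : V, v ∈ M ∨ ∃ i : Fin k, v ∈ C i)
    (c : V → Fin k → V)
    (hc : ∀ v ∈ M, ∀ i : Fin k, c v i ∈ C i)
    (G : SimpleGraph V)
    (hAdj : ∀ x y : V, G.Adj x y ↔
      ((x ≠ y ∧ ∃ i : Fin k, x ∈ C i ∧ y ∈ C i) ∨
        (∃ v ∈ M, ∃ i : Fin k, (x = v ∧ y = c v i) ∨ (y = v ∧ x = c v i))))
    (i j : Fin k) (hij : i ≠ j) (a b : V) (ha : a ∈ C i) (hb : b ∈ C j)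
    (S : Finset V) (hSM : S ⊆ M) (hScard : S.card ≤ k - 1)
    (haS : a ∉ S) (hbS : b ∉ S) :
    (G.induce {v : V | v ∉ S}).Reachable ⟨a, haS⟩ ⟨b, hbS⟩ :=
  layered_network_two_centers_delete_users_general k hk C M hMcard hCM c hc G hAdj i j a b ha hb S
    hSM hScard haS hbS
end

section
/- Let G be a connected simple graph on a finite vertex set V, and let D be a connected dominating set of G. Then G has a spanning tree with at least |V| − |D| leaves. -/
/-!
Keep the edges of `G` inside `D` and attach every vertex outside `D` to one chosen neighbour in
`D`. The resulting subgraph of `G` is connected because `G[D]` is, and in it every vertex outside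
`D` has exactly one neighbour. A spanning tree of this subgraph cannot drop that edge without
isolating the vertex, so all `|V| - |D|` vertices outside `D` are leaves of it.
-/

namespace SimpleGraph

variable {V : Type*}

theorem Connected.neighborSet_eq_singleton_of_le {T H : SimpleGraph V} (hT : T.Connected)
    (hle : T ≤ H) {u v : V} (hv : H.neighborSet v = {u}) : T.neighborSet v = {u} := by
  have huv : v ≠ u := H.ne_of_adj (hv.ge rfl)
  have hsub : T.neighborSet v ⊆ {u} := fun _ hw => hv.le (hle hw)
  exact ((hT.preconnected v u).nonempty_neighborSet_left huv).subset_singleton_iff.mp hsub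

variable (G : SimpleGraph V) (D : Set V) (g : V → V)

def pendantExtension : SimpleGraph V :=
  fromRel fun a b => (a ∈ D ∧ b ∈ D ∧ G.Adj a b) ∨ (a ∉ D ∧ b = g a)

variable {G D g}

theorem pendantExtension_le (hg : ∀ v ∉ D, G.Adj v (g v)) : G.pendantExtension D g ≤ G := by
  rintro a b ⟨-, (⟨-, -, hab⟩ | ⟨ha, rfl⟩) | (⟨-, -, hba⟩ | ⟨hb, rfl⟩)⟩
  · exact hab
  · exact hg a ha
  · exact hba.symm
  · exact (hg b hb).symm

theorem neighborSet_pendantExtension_of_notMem (hgD : ∀ v ∉ D, g v ∈ D) {v : V} (hv : v ∉ D) :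
    (G.pendantExtension D g).neighborSet v = {g v} := by
  ext w
  simp only [mem_neighborSet, pendantExtension, fromRel_adj, Set.mem_singleton_iff]
  constructor
  · rintro ⟨-, (⟨h, -⟩ | ⟨-, rfl⟩) | (⟨-, h, -⟩ | ⟨hw, rfl⟩)⟩
    · exact absurd h hv
    · rfl
    · exact absurd h hv
    · exact absurd (hgD w hw) hv
  · rintro rfl
    exact ⟨fun h => hv (h ▸ hgD v hv), Or.inl (Or.inr ⟨hv, rfl⟩)⟩

theorem pendantExtension_connected (hD : (G.induce D).Connected) (hgD : ∀ v ∉ D, g v ∈ D) :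
    (G.pendantExtension D g).Connected := by
  obtain ⟨r⟩ := hD.nonempty
  let φ : G.induce D →g G.pendantExtension D g :=
    ⟨Subtype.val, fun {a b} hab => ⟨hab.ne ∘ Subtype.ext, Or.inl (Or.inl ⟨a.2, b.2, hab⟩)⟩⟩
  have hreachD : ∀ d : D, (G.pendantExtension D g).Reachable r d :=
    fun d => (hD.preconnected r d).map φ
  rw [connected_iff_exists_forall_reachable]
  refine ⟨r, fun v => ?_⟩
  by_cases hv : v ∈ D
  · exact hreachD ⟨v, hv⟩
  · have hadj : (G.pendantExtension D g).Adj v (g v) :=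
      (neighborSet_pendantExtension_of_notMem hgD hv).ge (Set.mem_singleton _)
    exact (hreachD ⟨g v, hgD v hv⟩).trans hadj.reachable.symm

end SimpleGraph

open SimpleGraph

theorem spanning_tree_many_leaves_of_cds_general
    {V : Type} [Fintype V]
    (G : SimpleGraph V)
    (D : Finset V)
    (hDconn : (G.induce (↑D : Set V)).Connected)
    (hDdom : ∀ v : V, v ∉ D → ∃ w ∈ D, G.Adj v w) :
    ∃ T : SimpleGraph V, T ≤ G ∧ T.Connected ∧ T.IsAcyclic ∧
      Fintype.card V - D.card ≤ ({v : V | (T.neighborSet v).ncard = 1} : Set V).ncard := by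
  classical
  choose! g hgD hgAdj using hDdom
  obtain ⟨T, hTle, hT⟩ := (pendantExtension_connected hDconn hgD).exists_isTree_le
  refine ⟨T, hTle.trans (pendantExtension_le hgAdj), hT.connected, hT.isAcyclic, ?_⟩
  have hleaves : (↑Dᶜ : Set V) ⊆ {v | (T.neighborSet v).ncard = 1} := fun v hv => by
    have hv : v ∉ D := Finset.mem_compl.mp hv
    simp [hT.connected.neighborSet_eq_singleton_of_le hTle
      (neighborSet_pendantExtension_of_notMem hgD hv)]
  calc Fintype.card V - D.card = (↑Dᶜ : Set V).ncard := by
        rw [Set.ncard_coe_finset, Finset.card_compl]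
    _ ≤ _ := Set.ncard_le_ncard hleaves

/-- if `D` is a connected dominating set of a connected graph `G`,
then `G` has a spanning tree with at least `|V| - |D|` leaves. -/
theorem spanning_tree_many_leaves_of_cds
    {V : Type} [Fintype V] [DecidableEq V]
    (G : SimpleGraph V) (hG : G.Connected)
    (D : Finset V) (hD : D.Nonempty)
    (hDconn : (G.induce (↑D : Set V)).Connected)
    (hDdom : ∀ v : V, v ∉ D → ∃ w ∈ D, G.Adj v w) :
    ∃ T : SimpleGraph V, T ≤ G ∧ T.Connected ∧ T.IsAcyclic ∧
      Fintype.card V - D.card ≤ ({v : V | (T.neighborSet v).ncard = 1} : Set V).ncard :=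
  spanning_tree_many_leaves_of_cds_general G D hDconn hDdom
end

section
/- (Equivalence of maximum leaf spanning tree and minimum connected dominating set) Let G be a connected simple graph on a finite vertex set V with n = |V| ≥ 3, and let ℓ be a natural number with 2 ≤ ℓ ≤ n − 1. Then G has a spanning tree with at least ℓ leaves if and only if G has a connected dominating set of cardinality at most n − ℓ. -/
/-!
If `T` is a spanning tree of `G`, its non-leaves form a connected dominating set: an inner vertex
of a path has two neighbours on it, so the `T`-path between two non-leaves avoids the leaves, and
once there are at least three vertices the unique neighbour of a leaf is not a leaf. Conversely,
if `D` is a connected dominating set, keep the edges of `G` inside `D` and, for each `v ∉ D`, a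
single edge from `v` into `D`; every spanning tree of this connected graph has each `v ∉ D` as a
leaf.
-/

namespace SimpleGraph

variable {V : Type*}

def leaves (G : SimpleGraph V) : Set V := {v | (G.neighborSet v).ncard = 1}

structure IsConnectedDominating (G : SimpleGraph V) (D : Set V) : Prop where
  induce_connected : (G.induce D).Connected
  exists_adj : ∀ v ∉ D, ∃ w ∈ D, G.Adj v w

variable {G T : SimpleGraph V}

lemma Walk.IsPath.notMem_leaves {u v z : V} {p : G.Walk u v} (hp : p.IsPath)
    (hz : z ∈ p.support) (hzu : z ≠ u) (hzv : z ≠ v) : z ∉ G.leaves := by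
  obtain ⟨i, rfl, hi⟩ := Walk.mem_support_iff_exists_getVert.1 hz
  have hi0 : i ≠ 0 := by rintro rfl; simp at hzu
  have hil : i < p.length := lt_of_le_of_ne hi (by rintro rfl; simp at hzv)
  intro hleaf
  obtain ⟨x, hx⟩ := Set.ncard_eq_one.1 hleaf
  have := Set.ncard_le_ncard ((p.toSubgraph.neighborSet_subset _).trans hx.subset)
    (Set.finite_singleton x)
  rw [hp.ncard_neighborSet_toSubgraph_internal_eq_two hi0 hil, Set.ncard_singleton] at this
  omega

lemma Preconnected.induce_compl_leaves (hG : G.Preconnected) :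
    (G.induce G.leavesᶜ).Preconnected := by
  rintro ⟨a, ha⟩ ⟨b, hb⟩
  obtain ⟨p, hp⟩ := (hG a b).exists_isPath
  have hsupp : ∀ z ∈ p.support, z ∈ G.leavesᶜ := fun z hz => by
    by_cases hza : z = a
    · exact hza ▸ ha
    by_cases hzb : z = b
    · exact hzb ▸ hb
    exact hp.notMem_leaves hz hza hzb
  exact (p.induce _ hsupp).reachable

lemma Preconnected.eq_or_eq_of_neighborSet_eq_singleton (hG : G.Preconnected) {v w : V}
    (hv : G.neighborSet v = {w}) (hw : G.neighborSet w = {v}) (x : V) : x = v ∨ x = w := by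
  have hclosed : ∀ y z, G.Adj y z → y = v ∨ y = w → z = v ∨ z = w := by
    rintro y z hyz (rfl | rfl)
    · exact .inr (hv.subset hyz)
    · exact .inl (hw.subset hyz)
  suffices ∀ {y}, (y = v ∨ y = w) → G.Walk y x → x = v ∨ x = w from
    this (.inl rfl) (hG v x).some
  intro y hy p
  induction p with
  | nil => exact hy
  | cons h _ ih => exact ih (hclosed _ _ h hy)

lemma Preconnected.notMem_leaves_of_neighborSet_eq_singleton (hG : G.Preconnected)
    (hV : 2 < ENat.card V) {v w : V} (hv : G.neighborSet v = {w}) : w ∉ G.leaves := by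
  intro hw
  obtain ⟨x, hx⟩ := Set.ncard_eq_one.1 hw
  have hvw : G.Adj v w := hv.symm.subset rfl
  obtain rfl : v = x := hx.subset hvw.symm
  have : ENat.card V ≤ 2 := by
    rw [← Set.encard_univ, ← Set.encard_pair hvw.ne]
    exact Set.encard_le_encard fun y _ => hG.eq_or_eq_of_neighborSet_eq_singleton hv hx y
  exact this.not_gt hV

lemma Connected.compl_leaves_isConnectedDominating (hT : T.Connected) (hTG : T ≤ G)
    (hV : 2 < ENat.card V) : G.IsConnectedDominating T.leavesᶜ := by
  have hdom : ∀ v ∉ T.leavesᶜ, ∃ w ∈ T.leavesᶜ, G.Adj v w := fun v hv => by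
    obtain ⟨w, hw⟩ := Set.ncard_eq_one.1 (not_not.1 hv)
    exact ⟨w, hT.preconnected.notMem_leaves_of_neighborSet_eq_singleton hV hw,
      hTG (hw.symm.subset rfl)⟩
  obtain ⟨v⟩ := hT.nonempty
  have : Nonempty ↥(T.leavesᶜ) := by
    by_cases hv : v ∈ T.leavesᶜ
    · exact ⟨⟨v, hv⟩⟩
    · obtain ⟨w, hw, -⟩ := hdom v hv
      exact ⟨⟨w, hw⟩⟩
  exact ⟨⟨hT.preconnected.induce_compl_leaves.mono fun _ _ h => hTG h⟩, hdom⟩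

def pruneOutside (G : SimpleGraph V) (D : Set V) (f : V → V) : SimpleGraph V where
  Adj a b := G.Adj a b ∧ (a ∉ D → b = f a) ∧ (b ∉ D → a = f b)
  symm := ⟨fun _ _ h => ⟨h.1.symm, h.2.2, h.2.1⟩⟩
  loopless := ⟨fun a h => G.loopless.irrefl a h.1⟩

variable {D : Set V} {f : V → V}

lemma pruneOutside_le : G.pruneOutside D f ≤ G := fun _ _ h => h.1

lemma neighborSet_pruneOutside_subset {v : V} (hv : v ∉ D) :
    (G.pruneOutside D f).neighborSet v ⊆ {f v} := fun _ h => h.2.1 hv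

lemma preconnected_pruneOutside (hD : (G.induce D).Preconnected)
    (hf : ∀ v ∉ D, f v ∈ D ∧ G.Adj v (f v)) : (G.pruneOutside D f).Preconnected := by
  let φ : G.induce D →g G.pruneOutside D f :=
    ⟨Subtype.val, fun {x y} h => ⟨h, (absurd x.2 ·), (absurd y.2 ·)⟩⟩
  have hanchor : ∀ x, ∃ d ∈ D, (G.pruneOutside D f).Reachable x d := fun x => by
    by_cases hx : x ∈ D
    · exact ⟨x, hx, .rfl⟩
    · exact ⟨f x, (hf x hx).1,
        Adj.reachable ⟨(hf x hx).2, fun _ => rfl, (absurd (hf x hx).1 ·)⟩⟩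
  intro x y
  obtain ⟨a, ha, hxa⟩ := hanchor x
  obtain ⟨b, hb, hyb⟩ := hanchor y
  exact hxa.trans (((hD ⟨a, ha⟩ ⟨b, hb⟩).map φ).trans hyb.symm)

lemma IsConnectedDominating.exists_isTree_le (hD : G.IsConnectedDominating D) :
    ∃ T ≤ G, T.IsTree ∧ Dᶜ ⊆ T.leaves := by
  choose! f hf using hD.exists_adj
  obtain ⟨⟨d, hd⟩⟩ := hD.induce_connected.nonempty
  have : Nonempty V := ⟨d⟩
  have hH : (G.pruneOutside D f).Connected :=
    ⟨preconnected_pruneOutside hD.induce_connected.preconnected hf⟩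
  obtain ⟨T, hTH, hT⟩ := hH.exists_isTree_le
  refine ⟨T, hTH.trans pruneOutside_le, hT, fun v hv => ?_⟩
  have : Nontrivial V := ⟨⟨v, d, fun h => hv (h ▸ hd)⟩⟩
  obtain ⟨w, hw⟩ := hT.connected.preconnected.exists_adj_of_nontrivial v
  have hsub := (neighborSet_mono hTH v).trans (neighborSet_pruneOutside_subset hv)
  show (T.neighborSet v).ncard = 1
  rw [(Set.Nonempty.subset_singleton_iff (⟨w, hw⟩ : (T.neighborSet v).Nonempty)).1 hsub,
    Set.ncard_singleton]

end SimpleGraph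

theorem maxleaf_iff_cds_general
    {V : Type} [Fintype V]
    (G : SimpleGraph V) (hcard : 3 ≤ Fintype.card V)
    (l : ℕ) :
    (∃ T : SimpleGraph V, T ≤ G ∧ T.Connected ∧ T.IsAcyclic ∧
        l ≤ ({v : V | (T.neighborSet v).ncard = 1} : Set V).ncard) ↔
      (∃ D : Finset V, D.Nonempty ∧ (G.induce (↑D : Set V)).Connected ∧
        (∀ v : V, v ∉ D → ∃ w ∈ D, G.Adj v w) ∧
        D.card ≤ Fintype.card V - l) := by
  have hsplit (s : Set V) : sᶜ.ncard = Fintype.card V - s.ncard := by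
    rw [Set.ncard_compl, Nat.card_eq_fintype_card]
  constructor
  · rintro ⟨T, hTG, hT, -, hl⟩
    have hV : 2 < ENat.card V := by
      rw [ENat.card_eq_coe_fintype_card]
      exact_mod_cast hcard
    have hD := hT.compl_leaves_isConnectedDominating hTG hV
    have hfin := Set.toFinite T.leavesᶜ
    refine ⟨hfin.toFinset, ?_, ?_, ?_, ?_⟩
    · rw [← Finset.coe_nonempty, hfin.coe_toFinset]
      exact Set.nonempty_coe_sort.1 hD.induce_connected.nonempty
    · rw [hfin.coe_toFinset]
      exact hD.induce_connected
    · simpa only [Set.Finite.mem_toFinset] using hD.exists_adj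
    · rw [← Set.ncard_eq_toFinset_card _ hfin, hsplit]
      exact Nat.sub_le_sub_left hl _
  · rintro ⟨D, hDne, hDc, hdom, hDl⟩
    obtain ⟨T, hTG, hT, hleaves⟩ :=
      (SimpleGraph.IsConnectedDominating.mk hDc hdom).exists_isTree_le
    refine ⟨T, hTG, hT.connected, hT.isAcyclic, ?_⟩
    calc l ≤ Fintype.card V - D.card := by have := hDne.card_pos; omega
      _ = (↑D : Set V)ᶜ.ncard := by rw [hsplit, Set.ncard_coe_finset]
      _ ≤ T.leaves.ncard := Set.ncard_le_ncard hleaves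

/-- a connected graph `G` on `n ≥ 3` vertices has a spanning tree
with at least `ℓ` leaves (`2 ≤ ℓ ≤ n - 1`) iff it has a connected dominating set
of cardinality at most `n - ℓ`. -/
theorem maxleaf_iff_cds
    {V : Type} [Fintype V] [DecidableEq V]
    (G : SimpleGraph V) (hG : G.Connected) (hcard : 3 ≤ Fintype.card V)
    (l : ℕ) (hl2 : 2 ≤ l) (hln : l ≤ Fintype.card V - 1) :
    (∃ T : SimpleGraph V, T ≤ G ∧ T.Connected ∧ T.IsAcyclic ∧
        l ≤ ({v : V | (T.neighborSet v).ncard = 1} : Set V).ncard) ↔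
      (∃ D : Finset V, D.Nonempty ∧ (G.induce (↑D : Set V)).Connected ∧
        (∀ v : V, v ∉ D → ∃ w ∈ D, G.Adj v w) ∧
        D.card ≤ Fintype.card V - l) :=
  maxleaf_iff_cds_general G hcard l
end
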